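/- For all integers r ≥ 2 and t₁,…,t_r ≥ 1, the extremal number of the complete r-partite r-graph satisfies ex(n, K^{(r)}_{t₁,…,t_r}) ≤ O_{t₁,…,t_r}(n^{r − 1/(t₁⋯t_{r−1})}). -/

import Mathlib

/-!
Erdős's induction on `r`. If an `(r + 1)`-uniform family `E` contains no box with part sizes
`t₀, …, t_r`, then for every `t₀`-set `A` the common link of `A` (the `r`-sets `f` with
`{a} ∪ f ∈ E` for all `a ∈ A`) contains no box with part sizes `t₁, …, t_r`, so by induction it
has at most `C n^{r - 1/P}` members, `P = t₁⋯t_{r-1}`. Counting pairs `(A, f)` with `f` in the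
link of `A` gives `∑_f C(d(f), t₀) = ∑_A |link(A)|`, where `d(f)` is the codegree of the `r`-set
`f`; since the codegrees sum to at least `|E|`, the power-mean inequality turns this into
`(|E| - t₀ n^r)^{t₀} ≤ t₀^{t₀} C n^{t₀ (r + 1 - 1/(t₀ P))}`, i.e. `|E| = O(n^{r + 1 - 1/(t₀ P)})`.
In a uniform hypergraph every box has pairwise disjoint parts, so it is a copy of
`K^{(r)}_{t₁,…,t_r}`.
-/

open Finset

/-- An `r`-uniform hypergraph on vertex type `V`: a set of edges, each an `r`-element
subset of `V`. -/
structure HGraph (r : ℕ) (V : Type) where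
  edges : Finset (Finset V)
  uniform : ∀ e ∈ edges, e.card = r

variable {r : ℕ} {α β γ : Type}

/-- The set of homomorphisms from `F` to `H`: maps sending every edge of `F` to an edge of `H`. -/
def homFinset [Fintype α] [DecidableEq α] [Fintype β] [DecidableEq β]
    (F : HGraph r α) (H : HGraph r β) : Finset (α → β) :=
  Finset.univ.filter fun φ => ∀ e ∈ F.edges, e.image φ ∈ H.edges

/-- The number of homomorphisms from `F` to `H`. -/
def homCount [Fintype α] [DecidableEq α] [Fintype β] [DecidableEq β]
    (F : HGraph r α) (H : HGraph r β) : ℕ :=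
  (homFinset F H).card

/-- The homomorphism density `t_F(H) = hom(F,H) / v(H)^{v(F)}`. -/
noncomputable def homDensity [Fintype α] [DecidableEq α] [Fintype β] [DecidableEq β]
    (F : HGraph r α) (H : HGraph r β) : ℝ :=
  (homCount F H : ℝ) / (Fintype.card β : ℝ) ^ (Fintype.card α)

/-- `K_r^{(r)}`: the `r`-graph consisting of a single edge on `r` vertices. -/
def KEdge (r : ℕ) : HGraph r (Fin r) :=
  ⟨{Finset.univ}, by intro e he; rw [Finset.mem_singleton] at he; subst he; simp⟩

/-- Edge density of an `r`-graph, `t_{K_r^{(r)}}(H)`. -/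
noncomputable def edgeDensity [Fintype β] [DecidableEq β] (H : HGraph r β) : ℝ :=
  homDensity (KEdge r) H

/-- An `r`-graph `F` is Sidorenko if `t_F(H) ≥ t_{K_r^{(r)}}(H)^{e(F)}` for all `r`-graphs `H`. -/
def IsSidorenko [Fintype α] [DecidableEq α] (F : HGraph r α) : Prop :=
  ∀ (β : Type) [Fintype β] [DecidableEq β] (H : HGraph r β),
    homDensity F H ≥ edgeDensity H ^ F.edges.card

/-- The Sidorenko exponent
`s(F) = sup {s ≥ 0 : ∃ r-graph H with t_F(H) = t_{K_r^{(r)}}(H)^s > 0}`. -/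
noncomputable def sidorenkoExp [Fintype α] [DecidableEq α] (F : HGraph r α) : ℝ :=
  sSup {s : ℝ | 0 ≤ s ∧ ∃ (n : ℕ) (H : HGraph r (Fin n)),
    homDensity F H = edgeDensity H ^ s ∧ 0 < edgeDensity H ^ s}

/-- `d_M(U)`: the number of edges of `M` containing at least one vertex of `U`. -/
def degNear [DecidableEq α] (M : HGraph r α) (U : Finset α) : ℕ :=
  (M.edges.filter fun e => ∃ v ∈ U, v ∈ e).card

/-- The set of vertices appearing in some edge of a given edge set. -/
def edgeSupport [DecidableEq α] (Es : Finset (Finset α)) : Finset α :=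
  Es.biUnion id
/-- `H` contains a copy of `G` as a sub-hypergraph. -/
def HGraph.ContainsCopy [DecidableEq β] (H : HGraph r β) (G : HGraph r γ) : Prop :=
  ∃ φ : γ → β, Function.Injective φ ∧ ∀ e ∈ G.edges, e.image φ ∈ H.edges

/-- The extremal (Turán) number `ex(n, G)`: the maximum number of edges of an
`n`-vertex `r`-graph containing no sub-hypergraph isomorphic to `G`. -/
noncomputable def exNum {γ : Type} (n : ℕ) (G : HGraph r γ) : ℕ :=
  sSup {m : ℕ | ∃ H : HGraph r (Fin n), H.edges.card = m ∧ ¬ H.ContainsCopy G}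

/-- The complete `r`-partite `r`-graph `K^{(r)}_{t 0, …, t (r-1)}`: the vertex set is
the disjoint union of parts of sizes `t i`, and the edges are all `r`-sets with exactly
one vertex in each part. -/
def completeMultipartite (r : ℕ) (t : Fin r → ℕ) : HGraph r (Σ i : Fin r, Fin (t i)) where
  edges := Finset.univ.filter fun e : Finset (Σ i : Fin r, Fin (t i)) =>
    ∀ i : Fin r, (e.filter fun x => x.1 = i).card = 1
  uniform := by
    intro e he
    simp only [Finset.mem_filter, Finset.mem_univ, true_and] at he
    rw [Finset.card_eq_sum_card_fiberwise (f := Sigma.fst) (t := Finset.univ)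
      (fun x _ => Finset.mem_univ _)]
    simp [he]

lemma image_univ_fin_succ {V : Type*} [DecidableEq V] (g : Fin (r + 1) → V) :
    univ.image g = insert (g 0) (univ.image (Fin.tail g)) := by
  rw [Fin.univ_succ, cons_eq_insert, image_insert, map_eq_image, image_image]
  rfl

lemma sub_pow_le_pow_mul_choose (d s : ℕ) : (d - s) ^ s ≤ s ^ s * d.choose s :=
  calc (d - s) ^ s ≤ (d + 1 - s) ^ s := Nat.pow_le_pow_left (by omega) s
    _ ≤ d.descFactorial s := Nat.pow_sub_le_descFactorial d s
    _ = s.factorial * d.choose s := Nat.descFactorial_eq_factorial_mul_choose d s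
    _ ≤ s ^ s * d.choose s := Nat.mul_le_mul_right _ (Nat.factorial_le_pow s)

lemma le_rpow_inv_mul_rpow_of_pow_le {x c N ε : ℝ} {s : ℕ} (hs : s ≠ 0) (hx : 0 ≤ x)
    (hc : 0 ≤ c) (hN : 0 ≤ N) (h : x ^ s ≤ c * N ^ (s * ε)) :
    x ≤ c ^ (s⁻¹ : ℝ) * N ^ ε := by
  rwa [← pow_le_pow_iff_left₀ hx (by positivity) hs, mul_pow, Real.rpow_inv_natCast_pow hc hs,
    ← Real.rpow_mul_natCast hN, mul_comm ε]

lemma prod_filter_val_lt_eq_prod_castSucc {M : Type*} [CommMonoid M]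
    (f : Fin (r + 1) → M) :
    ∏ i ∈ univ.filter (fun i : Fin (r + 1) => (i : ℕ) < r), f i = ∏ i : Fin r, f i.castSucc := by
  rw [prod_filter, Fin.prod_univ_castSucc]
  simp

section Boxes

variable {V : Type} [Fintype V] [DecidableEq V]

def HasBox (E : Finset (Finset V)) (t : Fin r → ℕ) : Prop :=
  ∃ A : Fin r → Finset V, (∀ i, #(A i) = t i) ∧
    ∀ g : Fin r → V, (∀ i, g i ∈ A i) → univ.image g ∈ E

def codegree (E : Finset (Finset V)) (f : Finset V) : ℕ :=
  #{v | insert v f ∈ E}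

def commonLink (E : Finset (Finset V)) (r : ℕ) (A : Finset V) : Finset (Finset V) :=
  {f ∈ powersetCard r univ | ∀ a ∈ A, insert a f ∈ E}

lemma card_le_sum_codegree {E : Finset (Finset V)} (hE : ∀ e ∈ E, #e = r + 1) :
    #E ≤ ∑ f ∈ powersetCard r univ, codegree E f := by
  simp only [codegree, ← card_sigma]
  refine card_le_card_of_surjOn (fun p => insert p.2 p.1) fun e (he : e ∈ E) => ?_
  obtain ⟨v, hv⟩ := card_pos.mp (by rw [hE e he]; omega)
  refine ⟨⟨e.erase v, v⟩, ?_, insert_erase hv⟩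
  simpa [card_erase_of_mem hv, hE e he, insert_erase hv]

lemma sum_card_commonLink (E : Finset (Finset V)) (r s : ℕ) :
    ∑ A ∈ powersetCard s univ, #(commonLink E r A) =
      ∑ f ∈ powersetCard r univ, (codegree E f).choose s := by
  simp_rw [commonLink, card_filter]
  rw [sum_comm]
  refine sum_congr rfl fun f _ => ?_
  rw [← card_filter, codegree, ← card_powersetCard]
  congr 1
  ext A
  simp [subset_iff, and_comm]

lemma card_sub_pow_le_sum_card_commonLink {s : ℕ} (hs : s ≠ 0) {E : Finset (Finset V)}
    (hE : ∀ e ∈ E, #e = r + 1) :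
    (#E - s * Fintype.card V ^ r) ^ s ≤
      Fintype.card V ^ (r * (s - 1)) * s ^ s *
        ∑ A ∈ powersetCard s univ, #(commonLink E r A) := by
  set F := powersetCard r (univ : Finset V)
  have hF : #F ≤ Fintype.card V ^ r := by
    rw [card_powersetCard, card_univ]; exact Nat.choose_le_pow _ _
  have h_excess : #E - s * Fintype.card V ^ r ≤ ∑ f ∈ F, (codegree E f - s) := by
    have : ∑ f ∈ F, codegree E f ≤ ∑ f ∈ F, (codegree E f - s) + s * #F := by
      rw [mul_comm, ← smul_eq_mul, ← sum_const, ← sum_add_distrib]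
      exact sum_le_sum fun f _ => le_tsub_add
    have : #E ≤ ∑ f ∈ F, codegree E f := card_le_sum_codegree hE
    have := Nat.mul_le_mul_left s hF
    omega
  obtain ⟨s, rfl⟩ := Nat.exists_eq_add_one_of_ne_zero hs
  calc (#E - (s + 1) * Fintype.card V ^ r) ^ (s + 1)
      ≤ (∑ f ∈ F, (codegree E f - (s + 1))) ^ (s + 1) := Nat.pow_le_pow_left h_excess _
    _ ≤ #F ^ s * ∑ f ∈ F, (codegree E f - (s + 1)) ^ (s + 1) :=
      pow_sum_le_card_mul_sum_pow (fun _ _ => Nat.zero_le _) s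
    _ ≤ Fintype.card V ^ (r * s) * ∑ f ∈ F, (s + 1) ^ (s + 1) * (codegree E f).choose (s + 1) := by
      rw [pow_mul]
      gcongr with f
      exact sub_pow_le_pow_mul_choose _ _
    _ = _ := by
      rw [← mul_sum, sum_card_commonLink, Nat.add_sub_cancel, mul_assoc]

lemma hasBox_of_le_card {E : Finset (Finset V)} (hE : ∀ e ∈ E, #e = 1) {t : Fin 1 → ℕ}
    (h : t 0 ≤ #E) : HasBox E t := by
  set S : Finset V := {v | {v} ∈ E}
  have hES : #E ≤ #S := by
    refine card_le_card_of_surjOn (fun v => {v}) fun e (he : e ∈ E) => ?_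
    obtain ⟨v, rfl⟩ := card_eq_one.mp (hE e he)
    exact ⟨v, by simpa [S] using he, rfl⟩
  obtain ⟨A, hAS, hA⟩ := exists_subset_card_eq (h.trans hES)
  refine ⟨fun _ => A, fun i => by rwa [Subsingleton.elim i 0], fun g hg => ?_⟩
  simpa [univ_unique, S] using hAS (hg 0)

lemma hasBox_of_hasBox_commonLink {E : Finset (Finset V)} {t : Fin (r + 1) → ℕ}
    {A : Finset V} (hA : #A = t 0) (h : HasBox (commonLink E r A) (Fin.tail t)) :
    HasBox E t := by
  obtain ⟨B, hB, hBox⟩ := h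
  refine ⟨Fin.cons A B, Fin.cases hA hB, fun g hg => ?_⟩
  have hlink := hBox (Fin.tail g) fun i => hg i.succ
  rw [image_univ_fin_succ]
  exact (mem_filter.mp hlink).2 (g 0) (hg 0)

lemma sum_card_commonLink_le {s : ℕ} {E : Finset (Finset V)} {M : ℝ} (hM : 0 ≤ M)
    (hlink : ∀ A ∈ powersetCard s univ, (#(commonLink E r A) : ℝ) ≤ M) :
    ((∑ A ∈ powersetCard s univ, #(commonLink E r A) : ℕ) : ℝ) ≤
      (Fintype.card V : ℝ) ^ s * M := by
  have hcard : (#(powersetCard s (univ : Finset V)) : ℝ) ≤ (Fintype.card V : ℝ) ^ s := by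
    rw [card_powersetCard, card_univ]
    exact_mod_cast Nat.choose_le_pow _ _
  push_cast
  exact (sum_le_card_nsmul _ _ _ hlink).trans (by rw [nsmul_eq_mul]; gcongr)

lemma card_le_of_card_commonLink_le {s : ℕ} (hs : s ≠ 0) {E : Finset (Finset V)}
    (hE : ∀ e ∈ E, #e = r + 1) {C δ : ℝ} (hC : 0 ≤ C) (hδ : δ ≤ 1)
    (hlink : ∀ A ∈ powersetCard s univ,
      (#(commonLink E r A) : ℝ) ≤ C * (Fintype.card V : ℝ) ^ ((r : ℝ) - δ)) :
    (#E : ℝ) ≤ (s + (s ^ s * C) ^ (s⁻¹ : ℝ)) * (Fintype.card V : ℝ) ^ ((r : ℝ) + 1 - δ / s) := by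
  set N := Fintype.card V
  rcases Nat.eq_zero_or_pos N with hN | hN
  · have : E = ∅ := eq_empty_of_forall_notMem fun e he => by
      have := card_le_univ e
      rw [hE e he] at this
      omega
    simp only [this, card_empty, Nat.cast_zero]
    positivity
  have hN0 : (0 : ℝ) < N := by exact_mod_cast hN
  have hN1 : (1 : ℝ) ≤ N := by exact_mod_cast hN
  have hs1 : (1 : ℝ) ≤ s := by exact_mod_cast Nat.one_le_iff_ne_zero.mpr hs
  have hpow : (N : ℝ) ^ (r * (s - 1)) * N ^ s * N ^ ((r : ℝ) - δ) =
      N ^ ((s : ℝ) * ((r : ℝ) + 1 - δ / s)) := by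
    rw [← Real.rpow_natCast, ← Real.rpow_natCast (N : ℝ) s, ← Real.rpow_add hN0,
      ← Real.rpow_add hN0]
    congr 1
    push_cast [Nat.one_le_iff_ne_zero.mpr hs]
    field_simp
    ring
  have hexp : (N : ℝ) ^ (r * (s - 1)) * s ^ s * (N ^ s * (C * N ^ ((r : ℝ) - δ))) =
      s ^ s * C * N ^ ((s : ℝ) * ((r : ℝ) + 1 - δ / s)) := by
    rw [← hpow]
    ring
  have hexcess : ((#E - s * N ^ r : ℕ) : ℝ) ≤
      (s ^ s * C) ^ (s⁻¹ : ℝ) * N ^ ((r : ℝ) + 1 - δ / s) := by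
    refine le_rpow_inv_mul_rpow_of_pow_le hs (by positivity) (by positivity) (by positivity) ?_
    rw [← hexp]
    calc ((#E - s * N ^ r : ℕ) : ℝ) ^ s
        ≤ (N : ℝ) ^ (r * (s - 1)) * s ^ s *
            ((∑ A ∈ powersetCard s univ, #(commonLink E r A) : ℕ) : ℝ) := by
          exact_mod_cast card_sub_pow_le_sum_card_commonLink hs hE
      _ ≤ _ := by gcongr; exact sum_card_commonLink_le (by positivity) hlink
  have hNr : (N : ℝ) ^ r ≤ (N : ℝ) ^ ((r : ℝ) + 1 - δ / s) := by
    rw [← Real.rpow_natCast]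
    refine Real.rpow_le_rpow_of_exponent_le hN1 ?_
    have : δ / s ≤ 1 := (div_le_one (by positivity)).mpr (hδ.trans hs1)
    linarith
  calc (#E : ℝ) ≤ s * N ^ r + ((#E - s * N ^ r : ℕ) : ℝ) := by
        exact_mod_cast le_add_tsub
    _ ≤ _ := by rw [add_mul]; gcongr

end Boxes

theorem card_le_of_not_hasBox (r : ℕ) (t : Fin (r + 1) → ℕ) (ht : ∀ i, 1 ≤ t i) :
    ∃ C : ℝ, 0 < C ∧ ∀ (V : Type) [Fintype V] [DecidableEq V] (E : Finset (Finset V)),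
      (∀ e ∈ E, #e = r + 1) → ¬ HasBox E t →
        (#E : ℝ) ≤ C * (Fintype.card V : ℝ) ^ ((r : ℝ) + 1 - 1 / ∏ i : Fin r, (t i.castSucc : ℝ)) := by
  induction r with
  | zero =>
    refine ⟨t 0, by exact_mod_cast ht 0, fun V _ _ E hE hbox => ?_⟩
    have : #E < t 0 := not_le.mp fun h => hbox (hasBox_of_le_card hE h)
    simpa using this.le
  | succ r ih =>
    obtain ⟨C, hC, hlink⟩ := ih (Fin.tail t) fun i => ht i.succ
    set s := t 0
    set P := ∏ i : Fin r, (Fin.tail t i.castSucc : ℝ)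
    have hP : 1 ≤ P := one_le_prod fun i _ => by exact_mod_cast ht _
    have hprod : ∏ i : Fin (r + 1), (t i.castSucc : ℝ) = s * P := by
      simp [P, s, Fin.prod_univ_succ, Fin.tail]
    have hs : (0 : ℝ) < s := by exact_mod_cast ht 0
    refine ⟨s + (s ^ s * C) ^ (s⁻¹ : ℝ), by positivity, fun V _ _ E hE hbox => ?_⟩
    have hlinkE (A) (hA : A ∈ powersetCard s univ) : (#(commonLink E (r + 1) A) : ℝ) ≤
        C * (Fintype.card V : ℝ) ^ (((r + 1 : ℕ) : ℝ) - 1 / P) := by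
      push_cast
      exact hlink V _ (fun f hf => (mem_powersetCard.mp (mem_filter.mp hf).1).2)
        fun hb => hbox (hasBox_of_hasBox_commonLink (mem_powersetCard.mp hA).2 hb)
    convert card_le_of_card_commonLink_le (Nat.one_le_iff_ne_zero.mp (ht 0)) hE hC.le
      (div_le_one_of_le₀ hP (by positivity)) hlinkE using 3
    rw [hprod, div_div, mul_comm P]

section Copies

variable {V : Type} [DecidableEq V]

lemma HGraph.injective_of_image_univ_mem (H : HGraph r V) {g : Fin r → V}
    (hg : univ.image g ∈ H.edges) : Function.Injective g := by
  have hcard : #(univ.image g) = #(univ : Finset (Fin r)) := by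
    rw [H.uniform _ hg, card_univ, Fintype.card_fin]
  simpa using card_image_iff.mp hcard

lemma exists_eq_image_of_mem_completeMultipartite {t : Fin r → ℕ} {e}
    (he : e ∈ (completeMultipartite r t).edges) :
    ∃ x : Fin r → (Σ i : Fin r, Fin (t i)), (∀ i, (x i).1 = i) ∧ e = univ.image x := by
  choose x hx using fun i => card_eq_one.mp ((mem_filter.mp he).2 i)
  have hxe (i) : x i ∈ e ∧ (x i).1 = i := mem_filter.mp (hx i ▸ mem_singleton_self _)
  refine ⟨x, fun i => (hxe i).2, ?_⟩
  ext p
  constructor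
  · intro hp
    have : p ∈ e.filter (·.1 = p.1) := mem_filter.mpr ⟨hp, rfl⟩
    rw [hx, mem_singleton] at this
    exact mem_image.mpr ⟨p.1, mem_univ _, this.symm⟩
  · intro hp
    obtain ⟨i, -, rfl⟩ := mem_image.mp hp
    exact (hxe i).1

lemma HasBox.containsCopy [Fintype V] {H : HGraph r V} {t : Fin r → ℕ} (ht : ∀ i, 1 ≤ t i)
    (h : HasBox H.edges t) : H.ContainsCopy (completeMultipartite r t) := by
  obtain ⟨A, hA, hbox⟩ := h
  let φ : (Σ i : Fin r, Fin (t i)) → V := fun p => ((A p.1).equivFinOfCardEq (hA p.1)).symm p.2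
  have htrans (x : Fin r → Σ i : Fin r, Fin (t i)) (hx : ∀ i, (x i).1 = i) :
      univ.image (φ ∘ x) ∈ H.edges :=
    hbox _ fun i => by
      have hφ : φ (x i) ∈ A (x i).1 := Subtype.prop _
      rwa [hx i] at hφ
  refine ⟨φ, ?_, fun e he => ?_⟩
  · rintro ⟨i, a⟩ ⟨j, b⟩ hab
    obtain rfl | hij := eq_or_ne i j
    · simpa [φ] using hab
    let x : Fin r → Σ i : Fin r, Fin (t i) :=
      Function.update (Function.update (fun k => ⟨k, ⟨0, ht k⟩⟩) i ⟨i, a⟩) j ⟨j, b⟩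
    have hx (k) : (x k).1 = k := by
      simp only [x, Function.update_apply]
      split_ifs <;> simp_all
    have := H.injective_of_image_univ_mem (htrans x hx) (a₁ := i) (a₂ := j)
      (by simpa [x, hij, Function.update_apply] using hab)
    exact absurd this hij
  · obtain ⟨x, hx, rfl⟩ := exists_eq_image_of_mem_completeMultipartite he
    rw [image_image]
    exact htrans x hx

end Copies

lemma exNum_le_of_forall_card_le {n : ℕ} {G : HGraph r γ} {B : ℝ} (hB : 0 ≤ B)
    (h : ∀ H : HGraph r (Fin n), ¬ H.ContainsCopy G → (#H.edges : ℝ) ≤ B) :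
    (exNum n G : ℝ) ≤ B := by
  have : exNum n G ≤ ⌊B⌋₊ := csSup_le' fun m ⟨H, hm, hH⟩ => hm ▸ Nat.le_floor (h H hH)
  exact (Nat.cast_le.mpr this).trans (Nat.floor_le hB)

/-- The Kővári–Sós–Turán / Erdős theorem:
`ex(n, K^{(r)}_{t₁,…,t_r}) ≤ O_{t₁,…,t_r}(n^{r − 1/(t₁⋯t_{r−1})})`. -/
theorem stmt11 (r : ℕ) (hr : 2 ≤ r) (t : Fin r → ℕ) (ht : ∀ i, 1 ≤ t i) :
    ∃ C : ℝ, 0 < C ∧ ∀ n : ℕ,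
      (exNum n (completeMultipartite r t) : ℝ) ≤
        C * (n : ℝ) ^ ((r : ℝ) -
          1 / ∏ i ∈ Finset.univ.filter (fun i : Fin r => (i : ℕ) < r - 1), (t i : ℝ)) := by
  obtain ⟨r, rfl⟩ : ∃ r', r = r' + 1 := ⟨r - 1, by omega⟩
  obtain ⟨C, hC, hbound⟩ := card_le_of_not_hasBox r t ht
  refine ⟨C, hC, fun n => exNum_le_of_forall_card_le (by positivity) fun H hH => ?_⟩
  rw [Nat.add_sub_cancel, prod_filter_val_lt_eq_prod_castSucc, Nat.cast_succ]
  simpa using hbound (Fin n) H.edges H.uniform fun hb => hH (hb.containsCopy ht)
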